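/- Let P be a directed path in T (the maximal-label functional subgraph of the de Bruijn graph of span n rooted at the maximum vertex m) starting at a floor vertex (a vertex u with g(u) = ε), ending at a vertex v, such that all inner vertices of P are unrestricted (γ = α). Then the label of P equals g(v). -/

import Mathlib

/-!
Along the path, the label read so far is always `g` of the current vertex. At an unrestricted
vertex `u` the next label `α u` extends `g u` to a longer prefix of `m`, and the longest
overlap of the successor `u.tail ++ [α u]` with `m` cannot be longer still: dropping its last
letter would give an overlap of `u` longer than `g u`.
-/

namespace List

variable {A : Type*}

/-- The paper's `g(u)`: the longest suffix of `u` that is a prefix of `m`. -/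
def IsLongestOverlap (m u s : List A) : Prop :=
  s <+: m ∧ s <:+ u ∧ ∀ t : List A, t <+: m → t <:+ u → t.length ≤ s.length

theorem IsSuffix.suffix_tail {s u : List A} (h : s <:+ u) (hlt : s.length < u.length) :
    s <:+ u.tail := by
  cases u with
  | nil => simp at hlt
  | cons a u =>
    rcases suffix_cons_iff.mp h with rfl | h
    · simp at hlt
    · exact h

theorem IsLongestOverlap.tail_append {m u s s' : List A} {b : A}
    (hs : IsLongestOverlap m u s) (hlt : s.length < u.length) (hb : s ++ [b] <+: m)
    (hs' : IsLongestOverlap m (u.tail ++ [b]) s') : s' = s ++ [b] := by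
  have hsb : s ++ [b] <:+ u.tail ++ [b] :=
    suffix_append_self_iff.mpr (hs.2.1.suffix_tail hlt)
  have hlow : (s ++ [b]).length ≤ s'.length := hs'.2.2 _ hb hsb
  have hup : s'.length ≤ (s ++ [b]).length := by
    rcases suffix_concat_iff.mp hs'.2.1 with rfl | ⟨t, rfl, ht⟩
    · simp
    · have htm : t <+: m := (prefix_append t [b]).trans hs'.1
      simpa using hs.2.2 t htm (ht.trans u.tail_suffix)
  exact ((prefix_of_prefix_length_le hb hs'.1 hlow).eq_of_length_le hup).symm

end List

theorem path_label_eq_g {A : Type*} [LinearOrder A] (n len : ℕ)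
    (L V : Set (List A)) (m : List A) (g : List A → List A) (α γ : List A → A)
    (v : ℕ → List A)
    (hV : ∀ u ∈ V, u.length = n)
    (hg : ∀ u ∈ V, g u <+: m ∧ g u <:+ u ∧
      ∀ s : List A, s <+: m → s <:+ u → s.length ≤ (g u).length)
    (hglen : ∀ u ∈ V, u ≠ m → (g u).length < n)
    (hα : ∀ u ∈ V, u ≠ m → g u ++ [α u] <+: m)
    -- v is a path of T: each arc is the maximal-label outgoing arc
    (hvV : ∀ i ≤ len, v i ∈ V)
    (hvm : ∀ i < len, v i ≠ m)
    (hstep : ∀ i < len, (v i) ++ [γ (v i)] ∈ L ∧ v (i + 1) = (v i).tail ++ [γ (v i)])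
    -- the path starts at a floor vertex
    (hfloor : g (v 0) = [])
    -- all non-final vertices are unrestricted
    (hunres : ∀ i < len, γ (v i) = α (v i)) :
    (List.range len).map (fun i => γ (v i)) = g (v len) := by
  suffices h : ∀ i ≤ len, (List.range i).map (fun j => γ (v j)) = g (v i) from h len le_rfl
  intro i
  induction i with
  | zero => simp [hfloor]
  | succ i ih =>
    intro (hi : i < len)
    have hvi := hvV i hi.le
    have hlt : (g (v i)).length < (v i).length := hV _ hvi ▸ hglen _ hvi (hvm i hi)
    have hnext : List.IsLongestOverlap m ((v i).tail ++ [α (v i)]) (g (v (i + 1))) := by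
      rw [← hunres i hi, ← (hstep i hi).2]
      exact hg _ (hvV _ hi)
    rw [List.range_succ, List.map_append, ih hi.le, List.map_singleton, hunres i hi]
    exact (List.IsLongestOverlap.tail_append (hg _ hvi) hlt (hα _ hvi (hvm i hi)) hnext).symm
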